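/- Composition of attention processing preserves similarity: if two pointed attention runs are run-similar with respect to a color similarity ∼, then they are attention-similar with respect to ∼; i.e., applying the attention-processing function (which restricts each node's run to its attention rounds, renumbered consecutively) to two run-similar pointed attention runs yields run-similar pointed runs. -/
import Mathlib


/-- A run-skeleton over a domain `V` with labels `S` is a sequence of partial labelings
(here `Option`-valued functions) whose domains are decreasing over time. -/
def IsRunSkeleton {V S : Type} (r : ℕ → V → Option S) : Prop :=
  ∀ i : ℕ, ∀ u : V, (r (i + 1) u).isSome → (r i u).isSome

/-- Run-similarity of pointed runs w.r.t. a color similarity `sim` between the two label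
sets: there is a bijection of the domains mapping the distinguished node to the
distinguished node and matching the (partial) labels at every node and round, related
labels corresponding and undefined corresponding to undefined. -/
def PRunSimilar {V V' S S' : Type} (sim : S → S' → Prop)
    (r : ℕ → V → Option S) (v : V) (r' : ℕ → V' → Option S') (v' : V') : Prop :=
  ∃ g : V ≃ V', g v = v' ∧ ∀ (u : V) (i : ℕ), Option.Rel sim (r i u) (r' i (g u))

/-- Run-similarity of pointed attention runs: additionally the attention markers agree. -/
def PARunSimilar {V V' S S' : Type} (sim : S → S' → Prop)
    (r : ℕ → V → Option S) (a : ℕ → V → Option Bool) (v : V)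
    (r' : ℕ → V' → Option S') (a' : ℕ → V' → Option Bool) (v' : V') : Prop :=
  ∃ g : V ≃ V', g v = v' ∧
    (∀ (u : V) (i : ℕ), Option.Rel sim (r i u) (r' i (g u))) ∧
    (∀ (u : V) (i : ℕ), a i u = a' i (g u))

/-- The attention-processing function: at each node `u`, the processed run at index `k`
is the value of `r` at the `(k+1)`-th attention round of `u` (the `(k+1)`-th round `i`
with `a i u = some true`), and is undefined when `u` has no `(k+1)`-th attention round. -/
noncomputable def aproc {V S : Type} (r : ℕ → V → Option S) (a : ℕ → V → Option Bool) :
    ℕ → V → Option S :=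
  fun k u =>
    @ite _ ({i : ℕ | a i u = some true}.Infinite ∨ k < {i : ℕ | a i u = some true}.ncard)
      (Classical.propDecidable _)
      (r (Nat.nth (fun i => a i u = some true) k) u)
      none

/-- Attention processing preserves similarity: if two pointed attention
runs (with legitimate run-skeletons) are run-similar with respect to a color similarity
`sim`, then they are attention-similar with respect to `sim`, i.e. their images under the
attention-processing function are run-similar pointed runs. -/
theorem attention_processing_preserves_similarity
    {V V' S S' : Type} (sim : S → S' → Prop)
    (r : ℕ → V → Option S) (a : ℕ → V → Option Bool) (v : V)
    (r' : ℕ → V' → Option S') (a' : ℕ → V' → Option Bool) (v' : V')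
    (hr : IsRunSkeleton r) (ha : IsRunSkeleton a)
    (hr' : IsRunSkeleton r') (ha' : IsRunSkeleton a')
    (hsim : PARunSimilar sim r a v r' a' v') :
    PRunSimilar sim (aproc r a) v (aproc r' a') v' := by
  obtain ⟨g, hg, hrr, haa⟩ := hsim
  refine ⟨g, hg, fun u k => ?_⟩
  have hset : (fun i => a i u = some true) = (fun i => a' i (g u) = some true) :=
    funext fun i => by rw [haa]
  have hset' : {i : ℕ | a i u = some true} = {i : ℕ | a' i (g u) = some true} := by
    ext i; simp [haa u i]
  simp only [aproc, hset, hset']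
  by_cases h : {i : ℕ | a' i (g u) = some true}.Infinite ∨
      k < {i : ℕ | a' i (g u) = some true}.ncard
  · rw [hset', if_pos h, if_pos h]; exact hrr u _
  · rw [hset', if_neg h, if_neg h]; exact Option.Rel.none
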